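/- Let A be an M×N quaternion matrix with A = A_h + A_v·j. If A is a perfect quaternion array (R_A(m,n) = 0 for all (m,n) ≠ (0,0)), then the conjugate-free periodic cross-correlations commute: A_v ⋆ A_h = A_h ⋆ A_v. -/

import Mathlib

noncomputable section
open scoped BigOperators

def cq (z : ℂ) : Quaternion ℝ := ⟨z.re, z.im, 0, 0⟩
def qi : Quaternion ℝ := ⟨0, 1, 0, 0⟩
def qj : Quaternion ℝ := ⟨0, 0, 1, 0⟩
def qk : Quaternion ℝ := ⟨0, 0, 0, 1⟩

def qcorr {M N : ℕ} [NeZero M] [NeZero N]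
    (X Y : Matrix (ZMod M) (ZMod N) (Quaternion ℝ)) :
    Matrix (ZMod M) (ZMod N) (Quaternion ℝ) :=
  fun m n => ∑ k, ∑ l, X k l * Y (k + m) (l + n)

def Rq {M N : ℕ} [NeZero M] [NeZero N]
    (A : Matrix (ZMod M) (ZMod N) (Quaternion ℝ)) :
    Matrix (ZMod M) (ZMod N) (Quaternion ℝ) :=
  qcorr A (fun k l => star (A k l))

def ccorr {M N : ℕ} [NeZero M] [NeZero N]
    (X Y : Matrix (ZMod M) (ZMod N) ℂ) : Matrix (ZMod M) (ZMod N) ℂ :=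
  fun m n => ∑ k, ∑ l, X k l * Y (k + m) (l + n)

def Rc {M N : ℕ} [NeZero M] [NeZero N]
    (A : Matrix (ZMod M) (ZMod N) ℂ) : Matrix (ZMod M) (ZMod N) ℂ :=
  ccorr A (fun k l => star (A k l))

/-! Every quaternion is uniquely `cq z + cq w * qj` with `z w : ℂ`; since `qj * cq z = cq (star z) * qj`
and `qj * qj = -1`, the right autocorrelation of `A = cq Ah + cq Av * qj` has complex part
`Rc Ah + Rc Av` and `qj`-part `ccorr Av Ah - ccorr Ah Av`. Perfection kills the `qj`-part off the
origin, and at the origin the two cross-correlations agree because `ℂ` is commutative. -/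

theorem cq_eq_ofComplex (z : ℂ) : cq z = Quaternion.ofComplex z := rfl

@[simp] theorem re_qj : qj.re = 0 := rfl
@[simp] theorem imI_qj : qj.imI = 0 := rfl
@[simp] theorem imJ_qj : qj.imJ = 1 := rfl
@[simp] theorem imK_qj : qj.imK = 0 := rfl

theorem cq_add_cq_mul_qj_eq_zero_iff (z w : ℂ) : cq z + cq w * qj = 0 ↔ z = 0 ∧ w = 0 := by
  simp [cq_eq_ofComplex, Quaternion.ext_iff, Complex.ext_iff, Quaternion.re_mul,
    Quaternion.imI_mul, Quaternion.imJ_mul, Quaternion.imK_mul, Quaternion.re_zero,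
    Quaternion.imI_zero, Quaternion.imJ_zero, Quaternion.imK_zero, and_assoc]

theorem cq_add_cq_mul_qj_mul_star (a b c d : ℂ) :
    (cq a + cq b * qj) * star (cq c + cq d * qj)
      = cq (a * star c + b * star d) + cq (b * c - a * d) * qj := by
  ext <;> simp [cq_eq_ofComplex, Quaternion.re_mul, Quaternion.imI_mul, Quaternion.imJ_mul,
    Quaternion.imK_mul] <;> ring

theorem sum_cq_add_cq_mul_qj {ι : Type*} (s : Finset ι) (z w : ι → ℂ) :
    ∑ i ∈ s, (cq (z i) + cq (w i) * qj) = cq (∑ i ∈ s, z i) + cq (∑ i ∈ s, w i) * qj := by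
  simp only [cq_eq_ofComplex, map_sum, Finset.sum_add_distrib, Finset.sum_mul]

section Correlation

variable {M N : ℕ} [NeZero M] [NeZero N]

theorem ccorr_swap (X Y : Matrix (ZMod M) (ZMod N) ℂ) (m : ZMod M) (n : ZMod N) :
    ccorr Y X m n = ccorr X Y (-m) (-n) := by
  simp only [ccorr]
  symm
  rw [← Equiv.sum_comp (Equiv.addRight m)]
  refine Fintype.sum_congr _ _ fun k => ?_
  rw [← Equiv.sum_comp (Equiv.addRight n)]
  refine Fintype.sum_congr _ _ fun l => ?_
  simp [mul_comm]

theorem Rq_apply_of_eq_cq_add_cq_mul_qj {Ah Av : Matrix (ZMod M) (ZMod N) ℂ}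
    {A : Matrix (ZMod M) (ZMod N) (Quaternion ℝ)}
    (hA : ∀ k l, A k l = cq (Ah k l) + cq (Av k l) * qj) (m : ZMod M) (n : ZMod N) :
    Rq A m n = cq (Rc Ah m n + Rc Av m n) + cq (ccorr Av Ah m n - ccorr Ah Av m n) * qj := by
  simp only [Rq, Rc, qcorr, ccorr, hA, cq_add_cq_mul_qj_mul_star, sum_cq_add_cq_mul_qj,
    ← Finset.sum_add_distrib, ← Finset.sum_sub_distrib]

end Correlation

theorem pqa_components_cross_correlations_commute {M N : ℕ} [NeZero M] [NeZero N]
    (Ah Av : Matrix (ZMod M) (ZMod N) ℂ)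
    (A : Matrix (ZMod M) (ZMod N) (Quaternion ℝ))
    (hA : ∀ k l, A k l = cq (Ah k l) + cq (Av k l) * qj)
    (hperf : ∀ m n, (m, n) ≠ (0, 0) → Rq A m n = 0) :
    ccorr Av Ah = ccorr Ah Av := by
  funext m n
  by_cases horigin : (m, n) = (0, 0)
  · obtain ⟨rfl, rfl⟩ := Prod.mk.inj horigin
    simpa using ccorr_swap Ah Av 0 0
  · have hzero := hperf m n horigin
    rw [Rq_apply_of_eq_cq_add_cq_mul_qj hA, cq_add_cq_mul_qj_eq_zero_iff] at hzero
    exact sub_eq_zero.mp hzero.2
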